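/- arXiv:1804.05920 — 2 statements merged into one kernel-verified Lean document; each statement's English description precedes it below -/
import Mathlib

section
/- Let G be a group with a finite symmetric generating set S, let π : Y → X be a locally isometric covering map between metric spaces (Y,p) and (X,d), and let Φ and Ψ be uniformly continuous actions of G on X and Y respectively with π ∘ Ψ_g = Φ_g ∘ π for all g ∈ G. Suppose there exists δ₀ > 0 such that for each y ∈ Y and each 0 < δ < δ₀, π maps the open ball U_δ(y) isometrically onto the open ball U_δ(π(y)). Then Φ is expansive if and only if Ψ is expansive. -/
/-!
Below `δ₀`, `π` is an isometry along which small displacements lift. So two points of `Y` with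
the same image are at least `δ₀` apart, and a `Φ`-separation lifts to a `Ψ`-separation truncated
at `δ₀`. Conversely, if the `Φ`-orbits of `x, x'` stay `η`-close, lift `x, x'` to `η`-close
`y, y'`. Uniform continuity of the finitely many `Ψ_s`, `s ∈ S ∪ S⁻¹`, keeps `Ψ_{sg} y, Ψ_{sg} y'`
within `δ₀`, where `π` is isometric, whenever `Ψ_g y, Ψ_g y'` are `η`-close; so `η`-closeness
passes from `g` to `sg`, and since `S` generates `G` the `Ψ`-orbits never separate.
-/

/-- `π : Y → X` is a locally isometric covering map: a continuous surjection
such that every `x ∈ X` has a neighbourhood `U` whose preimage is a union of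
a pairwise disjoint family of open sets, each mapped bijectively and
isometrically onto `U` by `π`. -/
def IsLocallyIsometricCovering {Y X : Type*} [MetricSpace Y] [MetricSpace X]
    (π : Y → X) : Prop :=
  Continuous π ∧ Function.Surjective π ∧
    ∀ x : X, ∃ U : Set X, U ∈ nhds x ∧ ∃ 𝒱 : Set (Set Y),
      (∀ V ∈ 𝒱, IsOpen V) ∧ 𝒱.PairwiseDisjoint id ∧ π ⁻¹' U = ⋃₀ 𝒱 ∧
        ∀ V ∈ 𝒱, Set.BijOn π V U ∧
          ∀ y₁ ∈ V, ∀ y₂ ∈ V, dist (π y₁) (π y₂) = dist y₁ y₂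

/-- `Φ` is expansive: some `c > 0` separates every pair of distinct points
along the action. -/
def Expansive {G X : Type*} [Group G] [MetricSpace X] (Φ : G → X → X) : Prop :=
  ∃ c : ℝ, 0 < c ∧ ∀ x y : X, x ≠ y → ∃ g : G, dist (Φ g x) (Φ g y) > c

open Set Metric Pointwise

theorem Finset.exists_pos_forall_dist_lt_of_uniformContinuous {ι α β : Type*}
    [PseudoMetricSpace α] [PseudoMetricSpace β] (T : Finset ι) {f : ι → α → β}
    (hf : ∀ i ∈ T, UniformContinuous (f i)) {ε : ℝ} (hε : 0 < ε) :
    ∃ δ > 0, ∀ i ∈ T, ∀ a b, dist a b < δ → dist (f i a) (f i b) < ε := by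
  have hF : UniformContinuous fun a (i : T) => f i a := uniformContinuous_pi.2 fun i => hf i i.2
  obtain ⟨δ, hδ, hF⟩ := Metric.uniformContinuous_iff.1 hF ε hε
  exact ⟨δ, hδ, fun i hi a b hab => (dist_pi_lt_iff hε).1 (hF hab) ⟨i, hi⟩⟩

section BallIsometry

variable {X Y : Type*} [MetricSpace X] [MetricSpace Y]

def MapsBallsIsometricallyBelow (π : Y → X) (δ₀ : ℝ) : Prop :=
  ∀ y : Y, ∀ δ : ℝ, 0 < δ → δ < δ₀ →
    BijOn π (ball y δ) (ball (π y) δ) ∧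
      ∀ y₁ ∈ ball y δ, ∀ y₂ ∈ ball y δ, dist (π y₁) (π y₂) = dist y₁ y₂

namespace MapsBallsIsometricallyBelow

variable {π : Y → X} {δ₀ : ℝ}

theorem dist_eq (h : MapsBallsIsometricallyBelow π δ₀) {a b : Y} (hab : dist a b < δ₀) :
    dist (π a) (π b) = dist a b := by
  obtain ⟨δ, hδ, hδ₀⟩ := exists_between hab
  exact (h a δ (dist_nonneg.trans_lt hδ) hδ₀).2 a (mem_ball_self (dist_nonneg.trans_lt hδ)) b
    (mem_ball'.2 hδ)

theorem exists_lift (h : MapsBallsIsometricallyBelow π δ₀) {y : Y} {x : X}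
    (hx : dist (π y) x < δ₀) : ∃ y', π y' = x ∧ dist y y' = dist (π y) x := by
  obtain ⟨δ, hδ, hδ₀⟩ := exists_between hx
  obtain ⟨y', hy', rfl⟩ := (h y δ (dist_nonneg.trans_lt hδ) hδ₀).1.surjOn (mem_ball'.2 hδ)
  exact ⟨y', rfl, (h.dist_eq ((mem_ball'.1 hy').trans hδ₀)).symm⟩

theorem le_dist_of_map_eq (h : MapsBallsIsometricallyBelow π δ₀) {a b : Y} (hne : a ≠ b)
    (hab : π a = π b) : δ₀ ≤ dist a b := by
  by_contra! hlt
  have := h.dist_eq hlt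
  rw [hab, dist_self, eq_comm, dist_eq_zero] at this
  exact hne this

theorem min_le_dist (h : MapsBallsIsometricallyBelow π δ₀) (a b : Y) :
    min (dist (π a) (π b)) δ₀ ≤ dist a b := by
  rcases lt_or_ge (dist a b) δ₀ with hlt | hge
  · exact (min_le_left _ _).trans (h.dist_eq hlt).le
  · exact (min_le_right _ _).trans hge

end MapsBallsIsometricallyBelow

end BallIsometry

section Semiconjugacy

variable {G X Y : Type*} [Group G] [MetricSpace X] [MetricSpace Y]
  {Φ : G → X → X} {Ψ : G → Y → Y} {π : Y → X} {δ₀ : ℝ}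

theorem expansive_of_expansive_of_semiconj (hΦ : Expansive Φ)
    (hΨ1 : ∀ y : Y, Ψ 1 y = y) (hsemiconj : ∀ g : G, ∀ y : Y, π (Ψ g y) = Φ g (π y))
    (hball : MapsBallsIsometricallyBelow π δ₀) (hδ₀ : 0 < δ₀) : Expansive Ψ := by
  obtain ⟨c, hc, hsep⟩ := hΦ
  refine ⟨min c (δ₀ / 2), by positivity, fun y y' hne => ?_⟩
  by_cases hπ : π y = π y'
  · refine ⟨1, ?_⟩
    rw [hΨ1, hΨ1]
    exact (min_le_right _ _).trans_lt
      ((half_lt_self hδ₀).trans_le (hball.le_dist_of_map_eq hne hπ))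
  · obtain ⟨g, hg⟩ := hsep _ _ hπ
    refine ⟨g, (min_lt_min hg (half_lt_self hδ₀)).trans_le ?_⟩
    simpa only [hsemiconj] using hball.min_le_dist (Ψ g y) (Ψ g y')

theorem dist_apply_le_of_forall_dist_le [DecidableEq G] {S : Finset G} {η : ℝ}
    (hSgen : Subgroup.closure (S : Set G) = ⊤) (hΨ1 : ∀ y : Y, Ψ 1 y = y)
    (hΨmul : ∀ g h : G, ∀ y : Y, Ψ (g * h) y = Ψ g (Ψ h y))
    (hsemiconj : ∀ g : G, ∀ y : Y, π (Ψ g y) = Φ g (π y))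
    (hball : MapsBallsIsometricallyBelow π δ₀)
    (hstep : ∀ s ∈ S ∪ S⁻¹, ∀ a b : Y, dist a b ≤ η → dist (Ψ s a) (Ψ s b) < δ₀)
    {y y' : Y} (hyy' : dist y y' ≤ η) (hΦ : ∀ g : G, dist (Φ g (π y)) (Φ g (π y')) ≤ η)
    (g : G) : dist (Ψ g y) (Ψ g y') ≤ η := by
  have step : ∀ s ∈ S ∪ S⁻¹, ∀ g : G, dist (Ψ g y) (Ψ g y') ≤ η →
      dist (Ψ (s * g) y) (Ψ (s * g) y') ≤ η := by
    intro s hs g hg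
    have hclose := hstep s hs _ _ hg
    rw [← hΨmul, ← hΨmul] at hclose
    rw [← hball.dist_eq hclose, hsemiconj, hsemiconj]
    exact hΦ _
  have hg : g ∈ Subgroup.closure (S : Set G) := hSgen ▸ Subgroup.mem_top g
  induction hg using Subgroup.closure_induction_left with
  | one => rwa [hΨ1, hΨ1]
  | mul_left s hs g _ ih => exact step s (Finset.mem_union_left _ hs) g ih
  | inv_mul_cancel s hs g _ ih =>
    exact step s⁻¹ (Finset.mem_union_right _ (Finset.inv_mem_inv hs)) g ih

theorem expansive_of_expansive_of_semiconj_of_surjective [DecidableEq G] {S : Finset G}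
    (hΨ : Expansive Ψ) (hSgen : Subgroup.closure (S : Set G) = ⊤) (hΦ1 : ∀ x : X, Φ 1 x = x)
    (hΨ1 : ∀ y : Y, Ψ 1 y = y) (hΨmul : ∀ g h : G, ∀ y : Y, Ψ (g * h) y = Ψ g (Ψ h y))
    (hΨuc : ∀ g : G, UniformContinuous (Ψ g)) (hπ : Function.Surjective π)
    (hsemiconj : ∀ g : G, ∀ y : Y, π (Ψ g y) = Φ g (π y))
    (hball : MapsBallsIsometricallyBelow π δ₀) (hδ₀ : 0 < δ₀) : Expansive Φ := by
  obtain ⟨c, hc, hsep⟩ := hΨ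
  obtain ⟨ε, hε, hεS⟩ :=
    (S ∪ S⁻¹).exists_pos_forall_dist_lt_of_uniformContinuous (fun s _ => hΨuc s) hδ₀
  set η := min c (min ε δ₀) / 2
  have hη : 0 < η := by positivity
  have hηc : η < c := by grind
  have hηε : η < ε := by grind
  have hηδ₀ : η < δ₀ := by grind
  refine ⟨η, hη, fun x x' hne => ?_⟩
  by_contra! hclose
  obtain ⟨y, rfl⟩ := hπ x
  have hx' : dist (π y) x' ≤ η := by simpa only [hΦ1] using hclose 1
  obtain ⟨y', rfl, hyy'⟩ := hball.exists_lift (hx'.trans_lt hηδ₀)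
  obtain ⟨g, hg⟩ := hsep y y' fun h => hne (h ▸ rfl)
  have := dist_apply_le_of_forall_dist_le hSgen hΨ1 hΨmul hsemiconj hball
    (fun s hs a b hab => hεS s hs a b (hab.trans_lt hηε)) (hyy' ▸ hx') hclose g
  linarith

end Semiconjugacy

theorem expansive_iff_expansive_of_locallyIsometricCovering_general
    {G X Y : Type*} [Group G] [MetricSpace X] [MetricSpace Y]
    (Φ : G → X → X) (Ψ : G → Y → Y) (S : Finset G) (π : Y → X)
    (hSgen : Subgroup.closure (S : Set G) = ⊤)
    (hΦ1 : ∀ x : X, Φ 1 x = x)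
    (hΨ1 : ∀ y : Y, Ψ 1 y = y)
    (hΨmul : ∀ g h : G, ∀ y : Y, Ψ (g * h) y = Ψ g (Ψ h y))
    (hΨuc : ∀ g : G, UniformContinuous (Ψ g))
    (hπ : IsLocallyIsometricCovering π)
    (hsemiconj : ∀ g : G, ∀ y : Y, π (Ψ g y) = Φ g (π y))
    (δ₀ : ℝ) (hδ₀ : 0 < δ₀)
    (hball : ∀ y : Y, ∀ δ : ℝ, 0 < δ → δ < δ₀ →
      Set.BijOn π (Metric.ball y δ) (Metric.ball (π y) δ) ∧
        ∀ y₁ ∈ Metric.ball y δ, ∀ y₂ ∈ Metric.ball y δ,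
          dist (π y₁) (π y₂) = dist y₁ y₂) :
    Expansive Φ ↔ Expansive Ψ := by
  classical
  exact ⟨fun hΦ => expansive_of_expansive_of_semiconj hΦ hΨ1 hsemiconj hball hδ₀,
    fun hΨ => expansive_of_expansive_of_semiconj_of_surjective hΨ hSgen hΦ1 hΨ1 hΨmul hΨuc
      hπ.2.1 hsemiconj hball hδ₀⟩

/-- If `π : Y → X` is a locally isometric covering map intertwining the
uniformly continuous actions `Ψ` (on `Y`) and `Φ` (on `X`), and `π` maps all
sufficiently small balls isometrically onto balls, then `Φ` is expansive iff
`Ψ` is expansive. -/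
theorem expansive_iff_expansive_of_locallyIsometricCovering
    {G X Y : Type*} [Group G] [MetricSpace X] [MetricSpace Y]
    (Φ : G → X → X) (Ψ : G → Y → Y) (S : Finset G) (π : Y → X)
    (hSsymm : ∀ s ∈ S, s⁻¹ ∈ S)
    (hSgen : Subgroup.closure (S : Set G) = ⊤)
    (hΦ1 : ∀ x : X, Φ 1 x = x)
    (hΦmul : ∀ g h : G, ∀ x : X, Φ (g * h) x = Φ g (Φ h x))
    (hΦuc : ∀ g : G, UniformContinuous (Φ g))
    (hΨ1 : ∀ y : Y, Ψ 1 y = y)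
    (hΨmul : ∀ g h : G, ∀ y : Y, Ψ (g * h) y = Ψ g (Ψ h y))
    (hΨuc : ∀ g : G, UniformContinuous (Ψ g))
    (hπ : IsLocallyIsometricCovering π)
    (hsemiconj : ∀ g : G, ∀ y : Y, π (Ψ g y) = Φ g (π y))
    (δ₀ : ℝ) (hδ₀ : 0 < δ₀)
    (hball : ∀ y : Y, ∀ δ : ℝ, 0 < δ → δ < δ₀ →
      Set.BijOn π (Metric.ball y δ) (Metric.ball (π y) δ) ∧
        ∀ y₁ ∈ Metric.ball y δ, ∀ y₂ ∈ Metric.ball y δ,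
          dist (π y₁) (π y₂) = dist y₁ y₂) :
    Expansive Φ ↔ Expansive Ψ :=
  expansive_iff_expansive_of_locallyIsometricCovering_general Φ Ψ S π hSgen hΦ1 hΨ1 hΨmul hΨuc hπ
    hsemiconj δ₀ hδ₀ hball
end

section
/- Let G be a group with a finite symmetric generating set S, and let X be a metric space in which every closed ball is compact. If a uniformly continuous action Φ of G on X is expansive and has the shadowing property with respect to S, then Φ is strongly GH-stable with respect to S. -/
/-- The truncated metric `d^X(a,b) = min(d(a,b), 1)`. -/
noncomputable def truncDist {Z : Type*} [MetricSpace Z] (a b : Z) : ℝ :=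
  min (dist a b) 1

/-- The Hausdorff distance between subsets `A, B ⊆ Z` with respect to the
truncated metric `d^Z`. -/
noncomputable def truncHausdorffDist {Z : Type*} [MetricSpace Z]
    (A B : Set Z) : ℝ :=
  max (sSup ((fun a => sInf ((fun b => truncDist a b) '' B)) '' A))
      (sSup ((fun b => sInf ((fun a => truncDist a b) '' A)) '' B))

/-- A (not necessarily continuous) map `i : Y → X` is a `δ`-isometry:
`max{d^X_H(i(Y), X), sup_{y₁,y₂} |d^X(i y₁, i y₂) − d^Y(y₁, y₂)|} < δ`. -/
noncomputable def IsDeltaIsometry {Y X : Type*} [MetricSpace Y] [MetricSpace X]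
    (δ : ℝ) (i : Y → X) : Prop :=
  max (truncHausdorffDist (Set.range i) (Set.univ : Set X))
      (sSup (Set.range fun p : Y × Y =>
        |truncDist (i p.1) (i p.2) - truncDist p.1 p.2|)) < δ

/-- `sup_{(s,y) ∈ S × Y} d^X(Φ_s(i y), i(Ψ_s y))`. -/
noncomputable def semiconjDefect {G Y X : Type*} [Group G] [MetricSpace Y]
    [MetricSpace X] (S : Finset G) (Φ : G → X → X) (Ψ : G → Y → Y)
    (i : Y → X) : ℝ :=
  sSup {r : ℝ | ∃ s ∈ S, ∃ y : Y, r = truncDist (Φ s (i y)) (i (Ψ s y))}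

/-- `Φ` is strongly GH-stable with respect to `S`: for every `ε > 0` there is
`δ > 0` such that for every metric space `Y` and every uniformly continuous
action `Ψ` of `G` on `Y` admitting a `δ`-isometry `i : Y → X` with
`sup_{(s,y)} d^X(Φ_s(i y), i(Ψ_s y)) < δ`, there is a continuous `ε`-isometry
`k : Y → X` with `Φ_g ∘ k = k ∘ Ψ_g` for all `g ∈ G`. -/
def StronglyGHStable {G X : Type*} [Group G] [MetricSpace X]
    (Φ : G → X → X) (S : Finset G) : Prop :=
  ∀ ε : ℝ, 0 < ε → ∃ δ : ℝ, 0 < δ ∧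
    ∀ (Y : Type*) (_ : MetricSpace Y) (Ψ : G → Y → Y),
      (∀ y : Y, Ψ 1 y = y) → (∀ g h : G, ∀ y : Y, Ψ (g * h) y = Ψ g (Ψ h y)) →
      (∀ g : G, UniformContinuous (Ψ g)) →
      (∃ i : Y → X, IsDeltaIsometry δ i ∧ semiconjDefect S Φ Ψ i < δ) →
      ∃ k : Y → X, Continuous k ∧ IsDeltaIsometry ε k ∧
        ∀ g : G, ∀ y : Y, Φ g (k y) = k (Ψ g y)

/-- `f : G → X` is a `δ`-pseudo orbit of the action `Φ` with respect to
the generating set `S`. -/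
def IsPseudoOrbit {G X : Type*} [Group G] [MetricSpace X]
    (Φ : G → X → X) (S : Finset G) (δ : ℝ) (f : G → X) : Prop :=
  ∀ s ∈ S, ∀ g : G, dist (Φ s (f g)) (f (s * g)) < δ

/-- `Φ` has the shadowing property with respect to `S`. -/
def ShadowingProperty {G X : Type*} [Group G] [MetricSpace X]
    (Φ : G → X → X) (S : Finset G) : Prop :=
  ∀ ε : ℝ, 0 < ε → ∃ δ : ℝ, 0 < δ ∧
    ∀ f : G → X, IsPseudoOrbit Φ S δ f → ∃ x : X, ∀ g : G, dist (Φ g x) (f g) < ε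

/-!
Shadowing turns the orbit `g ↦ i (Ψ_g y)` of the approximate semiconjugacy `i` into a point
`k y` whose `Φ`-orbit traces it, and expansivity makes that point unique. Uniqueness gives
equivariance (the traced orbit of `Ψ_g y` is a shift of that of `y`) and, with compactness of
closed balls, continuity: every cluster point of `k` at `y` traces the orbit of `y` up to a
slightly larger error, so it is `k y`. Since `k` stays close to `i`, it is still an
approximate isometry.
-/

open Filter Topology

section truncDist

variable {Z : Type*} [MetricSpace Z]

lemma truncDist_nonneg (a b : Z) : 0 ≤ truncDist a b :=
  le_min dist_nonneg zero_le_one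

lemma truncDist_le_one (a b : Z) : truncDist a b ≤ 1 :=
  min_le_right _ _

lemma truncDist_le_dist (a b : Z) : truncDist a b ≤ dist a b :=
  min_le_left _ _

lemma truncDist_comm (a b : Z) : truncDist a b = truncDist b a := by
  rw [truncDist, truncDist, dist_comm]

lemma truncDist_self (a : Z) : truncDist a a = 0 := by
  simp [truncDist]

lemma truncDist_triangle (a b c : Z) :
    truncDist a c ≤ truncDist a b + truncDist b c := by
  unfold truncDist
  have := dist_triangle a b c
  rcases min_cases (dist a b) 1 with h₁ | h₁ <;> rcases min_cases (dist b c) 1 with h₂ | h₂ <;>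
    rcases min_cases (dist a c) 1 with h₃ | h₃ <;> linarith [dist_nonneg (x := a) (y := b),
      dist_nonneg (x := b) (y := c)]

lemma dist_lt_of_truncDist_lt {a b : Z} {r : ℝ} (h : truncDist a b < r) (hr : r ≤ 1) :
    dist a b < r :=
  (min_lt_iff.1 h).resolve_right hr.not_gt

lemma abs_truncDist_sub_truncDist_le (a b c d : Z) :
    |truncDist a b - truncDist c d| ≤ truncDist a c + truncDist b d := by
  rw [abs_sub_le_iff]
  constructor
  · linarith [truncDist_triangle a c b, truncDist_triangle c d b, truncDist_comm d b]
  · linarith [truncDist_triangle c a d, truncDist_triangle a b d, truncDist_comm c a]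

end truncDist

namespace IsDeltaIsometry

variable {Y X : Type*} [MetricSpace Y] [MetricSpace X] {δ ε : ℝ} {i k : Y → X}

lemma abs_truncDist_sub_lt (hi : IsDeltaIsometry δ i) (y₁ y₂ : Y) :
    |truncDist (i y₁) (i y₂) - truncDist y₁ y₂| < δ := by
  have hbdd : BddAbove (Set.range fun p : Y × Y =>
      |truncDist (i p.1) (i p.2) - truncDist p.1 p.2|) := by
    refine ⟨1, ?_⟩
    rintro _ ⟨p, rfl⟩
    exact abs_sub_le_of_nonneg_of_le (truncDist_nonneg _ _) (truncDist_le_one _ _)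
      (truncDist_nonneg _ _) (truncDist_le_one _ _)
  exact ((le_csSup hbdd ⟨(y₁, y₂), rfl⟩).trans (le_max_right _ _)).trans_lt hi

lemma pos [Nonempty Y] (hi : IsDeltaIsometry δ i) : 0 < δ := by
  obtain ⟨y⟩ := ‹Nonempty Y›
  simpa [truncDist_self] using hi.abs_truncDist_sub_lt y y

lemma dist_lt {y₁ y₂ : Y} {r : ℝ} (hi : IsDeltaIsometry δ i) (h : dist y₁ y₂ < r)
    (hr : r + δ ≤ 1) : dist (i y₁) (i y₂) < r + δ := by
  have := (abs_lt.1 (hi.abs_truncDist_sub_lt y₁ y₂)).2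
  exact dist_lt_of_truncDist_lt (by linarith [truncDist_le_dist y₁ y₂]) hr

lemma exists_truncDist_lt [Nonempty Y] (hi : IsDeltaIsometry δ i) (x : X) :
    ∃ y, truncDist (i y) x < δ := by
  obtain ⟨y₀⟩ := ‹Nonempty Y›
  have hbddBelow (b : X) : BddBelow ((fun a => truncDist a b) '' Set.range i) :=
    ⟨0, by rintro _ ⟨_, _, rfl⟩; exact truncDist_nonneg _ _⟩
  have hbddAbove : BddAbove
      ((fun b : X => sInf ((fun a => truncDist a b) '' Set.range i)) '' Set.univ) := by
    refine ⟨1, ?_⟩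
    rintro _ ⟨b, -, rfl⟩
    exact (csInf_le (hbddBelow b) ⟨i y₀, ⟨y₀, rfl⟩, rfl⟩).trans (truncDist_le_one _ _)
  have hinf : sInf ((fun a => truncDist a x) '' Set.range i) < δ :=
    ((le_csSup hbddAbove ⟨x, trivial, rfl⟩).trans
      ((le_max_right _ _).trans (le_max_left _ _))).trans_lt hi
  obtain ⟨_, ⟨_, ⟨y, rfl⟩, rfl⟩, hy⟩ :=
    exists_lt_of_csInf_lt ((Set.range_nonempty i).image _) hinf
  exact ⟨y, hy⟩

lemma of_forall_le {a : ℝ} (ha : 0 ≤ a) (haε : a < ε)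
    (hdense : ∀ x, ∃ y, truncDist (k y) x ≤ a)
    (hdist : ∀ y₁ y₂, |truncDist (k y₁) (k y₂) - truncDist y₁ y₂| ≤ a) :
    IsDeltaIsometry ε k := by
  refine lt_of_le_of_lt (max_le (max_le ?_ ?_) ?_) haε
  · refine Real.sSup_le ?_ ha
    rintro _ ⟨_, ⟨y, rfl⟩, rfl⟩
    refine le_trans (csInf_le ?_ ⟨k y, trivial, truncDist_self _⟩) ha
    exact ⟨0, by rintro _ ⟨_, _, rfl⟩; exact truncDist_nonneg _ _⟩
  · refine Real.sSup_le ?_ ha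
    rintro _ ⟨x, -, rfl⟩
    obtain ⟨y, hy⟩ := hdense x
    refine le_trans (csInf_le ?_ ⟨k y, ⟨y, rfl⟩, rfl⟩) hy
    exact ⟨0, by rintro _ ⟨_, _, rfl⟩; exact truncDist_nonneg _ _⟩
  · exact Real.sSup_le (by rintro _ ⟨p, rfl⟩; exact hdist _ _) ha

lemma of_truncDist_le {η : ℝ} (hi : IsDeltaIsometry δ i) (hη : 0 ≤ η) (hε : δ + 2 * η < ε)
    (hk : ∀ y, truncDist (k y) (i y) ≤ η) : IsDeltaIsometry ε k := by
  rcases isEmpty_or_nonempty Y with _ | _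
  · rw [Subsingleton.elim k i]
    exact hi.trans_le (by linarith)
  refine of_forall_le (a := δ + 2 * η) (by linarith [hi.pos]) hε (fun x => ?_) (fun y₁ y₂ => ?_)
  · obtain ⟨y, hy⟩ := hi.exists_truncDist_lt x
    exact ⟨y, by linarith [truncDist_triangle (k y) (i y) x, hk y]⟩
  · linarith [abs_sub_le (truncDist (k y₁) (k y₂)) (truncDist (i y₁) (i y₂)) (truncDist y₁ y₂),
      abs_truncDist_sub_truncDist_le (k y₁) (k y₂) (i y₁) (i y₂), hk y₁, hk y₂,
      hi.abs_truncDist_sub_lt y₁ y₂]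

end IsDeltaIsometry

lemma IsPseudoOrbit.mono {G X : Type*} [Group G] [MetricSpace X] {Φ : G → X → X}
    {S : Finset G} {δ δ' : ℝ} {f : G → X} (hf : IsPseudoOrbit Φ S δ f) (hδ : δ ≤ δ') :
    IsPseudoOrbit Φ S δ' f :=
  fun s hs g => (hf s hs g).trans_le hδ

lemma isPseudoOrbit_of_semiconjDefect_lt {G Y X : Type*} [Group G] [MetricSpace Y]
    [MetricSpace X] {S : Finset G} {Φ : G → X → X} {Ψ : G → Y → Y} {i : Y → X} {δ : ℝ}
    (hΨmul : ∀ g h : G, ∀ y : Y, Ψ (g * h) y = Ψ g (Ψ h y))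
    (hi : semiconjDefect S Φ Ψ i < δ) (hδ : δ ≤ 1) (y : Y) :
    IsPseudoOrbit Φ S δ (fun g => i (Ψ g y)) := by
  intro s hs g
  dsimp only
  have hbdd : BddAbove
      {r : ℝ | ∃ s ∈ S, ∃ y : Y, r = truncDist (Φ s (i y)) (i (Ψ s y))} := by
    refine ⟨1, ?_⟩
    rintro _ ⟨_, -, _, rfl⟩
    exact truncDist_le_one _ _
  rw [hΨmul]
  exact dist_lt_of_truncDist_lt ((le_csSup hbdd ⟨s, hs, Ψ g y, rfl⟩).trans_lt hi) hδ

lemma eq_of_forall_dist_le_of_separating {G X : Type*} [MetricSpace X] {Φ : G → X → X}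
    {c η : ℝ} (hsep : ∀ x y : X, x ≠ y → ∃ g : G, dist (Φ g x) (Φ g y) > c) (hη : 2 * η ≤ c)
    {f : G → X} {x x' : X} (hx : ∀ g, dist (Φ g x) (f g) ≤ η)
    (hx' : ∀ g, dist (Φ g x') (f g) ≤ η) : x = x' := by
  by_contra hne
  obtain ⟨g, hg⟩ := hsep x x' hne
  linarith [dist_triangle_right (Φ g x) (Φ g x') (f g), hx g, hx' g]

lemma IsCompact.tendsto_nhds_of_eventually_mem_closed {α ι X : Type*} [TopologicalSpace X]
    {l : Filter α} {f : α → X} {a : X} {K : Set X} {C : ι → Set X} (hK : IsCompact K)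
    (hfK : ∀ᶠ x in l, f x ∈ K) (hC : ∀ j, IsClosed (C j)) (hfC : ∀ j, ∀ᶠ x in l, f x ∈ C j)
    (huniq : ∀ z, (∀ j, z ∈ C j) → z = a) : Tendsto f l (𝓝 a) :=
  hK.tendsto_nhds_of_unique_mapClusterPt hfK fun z _ hz =>
    huniq z fun j => (hC j).mem_of_mapClusterPt hz (hfC j)

lemma continuous_of_unique_tracing {G Y X : Type*} [One G] [MetricSpace Y] [MetricSpace X]
    [ProperSpace X] {Φ : G → X → X} {Ψ : G → Y → Y} {i k : Y → X} {δ η : ℝ}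
    (hΦ1 : ∀ x, Φ 1 x = x) (hΨ1 : ∀ y, Ψ 1 y = y) (hΦ : ∀ g, Continuous (Φ g))
    (hΨ : ∀ g, Continuous (Ψ g)) (hi : IsDeltaIsometry δ i) (hδ : 2 * δ ≤ 1)
    (hk : ∀ y g, dist (Φ g (k y)) (i (Ψ g y)) < η)
    (huniq : ∀ y x, (∀ g, dist (Φ g x) (i (Ψ g y)) ≤ η + 2 * δ) → x = k y) :
    Continuous k := by
  refine continuous_iff_continuousAt.2 fun y => ?_
  have : Nonempty Y := ⟨y⟩
  have hnear (g : G) : ∀ᶠ y' in 𝓝 y, dist (Φ g (k y')) (i (Ψ g y)) ≤ η + 2 * δ := by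
    filter_upwards [(hΨ g).continuousAt.eventually (Metric.ball_mem_nhds _ hi.pos)] with y' hy'
    have := hi.dist_lt (Metric.mem_ball.1 hy') (by linarith)
    linarith [dist_triangle (Φ g (k y')) (i (Ψ g y')) (i (Ψ g y)), hk y' g]
  refine (isCompact_closedBall (i y) (η + 2 * δ)).tendsto_nhds_of_eventually_mem_closed
    ?_ (fun g => isClosed_le ((hΦ g).dist continuous_const) continuous_const) hnear (huniq y)
  simpa only [hΦ1, hΨ1, Metric.mem_closedBall] using hnear 1

theorem stronglyGHStable_of_expansive_of_shadowing_general
    {G X : Type*} [Group G] [MetricSpace X] [ProperSpace X]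
    (Φ : G → X → X) (S : Finset G)
    (hΦ1 : ∀ x : X, Φ 1 x = x)
    (hΦmul : ∀ g h : G, ∀ x : X, Φ (g * h) x = Φ g (Φ h x))
    (hΦuc : ∀ g : G, UniformContinuous (Φ g))
    (hexp : Expansive Φ)
    (hshad : ShadowingProperty Φ S) :
    StronglyGHStable Φ S := by
  obtain ⟨c, hc, hsep⟩ := hexp
  intro ε hε
  obtain ⟨η, hη, hηε, hηc, hη1⟩ : ∃ η > 0, 3 * η < ε ∧ 6 * η ≤ c ∧ 2 * η ≤ 1 := by
    have hm : 0 < min (min ε c) 1 := lt_min (lt_min hε hc) one_pos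
    refine ⟨min (min ε c) 1 / 6, by positivity, ?_, ?_, ?_⟩ <;>
      linarith [min_le_left (min ε c) 1, min_le_right (min ε c) 1, min_le_left ε c,
        min_le_right ε c]
  obtain ⟨δ₀, hδ₀, hshadow⟩ := hshad η hη
  obtain ⟨δ, hδ, hδδ₀, hδη⟩ : ∃ δ > 0, δ ≤ δ₀ ∧ δ ≤ η :=
    ⟨min δ₀ η, lt_min hδ₀ hη, min_le_left _ _, min_le_right _ _⟩
  refine ⟨δ, hδ, fun Y _ Ψ hΨ1 hΨmul hΨuc ⟨i, hi, hdefect⟩ => ?_⟩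
  choose k hk using fun y => hshadow _
    ((isPseudoOrbit_of_semiconjDefect_lt hΨmul hdefect (by linarith) y).mono hδδ₀)
  have huniq (y : Y) (x : X) (hx : ∀ g, dist (Φ g x) (i (Ψ g y)) ≤ η + 2 * δ) : x = k y :=
    eq_of_forall_dist_le_of_separating hsep (by linarith) hx fun g => by linarith [hk y g]
  refine ⟨k, continuous_of_unique_tracing hΦ1 hΨ1 (fun g => (hΦuc g).continuous)
      (fun g => (hΨuc g).continuous) hi (by linarith) hk huniq,
    hi.of_truncDist_le hη.le (by linarith) fun y => ?_, fun g y => huniq _ _ fun h => ?_⟩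
  · simpa only [hΦ1, hΨ1] using (truncDist_le_dist _ _).trans (hk y 1).le
  · rw [← hΦmul, ← hΨmul]
    linarith [hk y (h * g)]

/-- An expansive uniformly continuous action with the shadowing property on a
metric space in which every closed ball is compact is strongly GH-stable. -/
theorem stronglyGHStable_of_expansive_of_shadowing
    {G X : Type*} [Group G] [MetricSpace X] [ProperSpace X]
    (Φ : G → X → X) (S : Finset G)
    (hSsymm : ∀ s ∈ S, s⁻¹ ∈ S)
    (hSgen : Subgroup.closure (S : Set G) = ⊤)
    (hΦ1 : ∀ x : X, Φ 1 x = x)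
    (hΦmul : ∀ g h : G, ∀ x : X, Φ (g * h) x = Φ g (Φ h x))
    (hΦuc : ∀ g : G, UniformContinuous (Φ g))
    (hexp : Expansive Φ)
    (hshad : ShadowingProperty Φ S) :
    StronglyGHStable Φ S :=
  stronglyGHStable_of_expansive_of_shadowing_general Φ S hΦ1 hΦmul hΦuc hexp hshad
end
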